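/- arXiv:2412.03997 — 3 statements merged into one kernel-verified Lean document; each statement's English description precedes it below -/
import Mathlib

section
/- Let ψ, g : [0,∞) → [0,∞) with ψ ∈ C^2, g ∈ C^1, ψ'(0) = 0, and ψ''(r) + g'(r) ≥ 0 for all r ≥ 0. Suppose there exists x_0 > 0 with ψ(x_0) < ψ(0), and let f = e^ψ. Then there exists v_0 > 0 such that for every v ∈ (0, v_0), the interval J_1 with left endpoint x_0 and weighted length ∫_{J_1} f dx = v satisfies E(J_1) < E(J_0), where J_0 is the centered symmetric interval with weighted length v and E(I) = f(inf I) + f(sup I) + ∫_I g(|x|) f(|x|) dx. -/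
open MeasureTheory Set intervalIntegral

/-!
The energy of `[a, b]` depends continuously on the endpoints. The off-center interval shrinks
to the point `x₀` and the centered one to the origin, where the energies are `2 e^{ψ(x₀)}` and
`2 e^{ψ(0)}`; since `f = e^ψ ≥ 1`, an interval of weighted length `v` has length at most `v`, so
for small `v` both intervals are close enough to their limits to inherit the strict inequality.
-/

theorem continuous_intervalIntegral_endpoints {h : ℝ → ℝ} (hh : Continuous h) :
    Continuous fun p : ℝ × ℝ => ∫ x in p.1..p.2, h x := by
  have hint : ∀ a b : ℝ, IntervalIntegrable h volume a b := hh.intervalIntegrable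
  have hsplit : (fun p : ℝ × ℝ => ∫ x in p.1..p.2, h x) =
      fun p => (∫ x in (0 : ℝ)..p.2, h x) - ∫ x in (0 : ℝ)..p.1, h x := by
    funext p
    exact (integral_interval_sub_left (hint 0 p.2) (hint 0 p.1)).symm
  rw [hsplit]
  exact ((continuous_primitive hint 0).comp continuous_snd).sub
    ((continuous_primitive hint 0).comp continuous_fst)

theorem sub_le_intervalIntegral_of_one_le {f : ℝ → ℝ} {a b : ℝ} (hab : a ≤ b)
    (hf : IntervalIntegrable f volume a b) (h1 : ∀ x ∈ Icc a b, 1 ≤ f x) :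
    b - a ≤ ∫ x in a..b, f x := by
  simpa using integral_mono_on hab intervalIntegrable_const hf h1

theorem exists_forall_lt_of_continuousAt_of_lt {u w : ℝ → ℝ} {x : ℝ} (hu : ContinuousAt u x)
    (hw : ContinuousAt w x) (hlt : u x < w x) :
    ∃ δ > 0, ∀ s t, dist s x < δ → dist t x < δ → u s < w t := by
  obtain ⟨m, hum, hmw⟩ := exists_between hlt
  obtain ⟨δ, hδ, hball⟩ := Metric.eventually_nhds_iff.1
    ((hu.eventually (gt_mem_nhds hum)).and (hw.eventually (lt_mem_nhds hmw)))
  exact ⟨δ, hδ, fun s t hs ht => ((hball hs).1).trans (hball ht).2⟩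

noncomputable def energy (ψ g : ℝ → ℝ) (a b : ℝ) : ℝ :=
  Real.exp (ψ |a|) + Real.exp (ψ |b|) + ∫ x in a..b, g |x| * Real.exp (ψ |x|)

theorem energy_self (ψ g : ℝ → ℝ) (a : ℝ) : energy ψ g a a = 2 * Real.exp (ψ |a|) := by
  simp only [energy, integral_same]
  ring

theorem continuous_energy {ψ g : ℝ → ℝ} (hψ : Continuous ψ) (hg : Continuous g) :
    Continuous fun p : ℝ × ℝ => energy ψ g p.1 p.2 := by
  unfold energy
  have := continuous_intervalIntegral_endpoints (h := fun x => g |x| * Real.exp (ψ |x|))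
    (by fun_prop)
  fun_prop

theorem off_center_interval_beats_centered_general
    (ψ g : ℝ → ℝ) (hψ : ContDiff ℝ 2 ψ) (hg : ContDiff ℝ 1 g)
    (hψ0 : ∀ r : ℝ, 0 ≤ r → 0 ≤ ψ r)
    (x₀ : ℝ) (hx₀ : 0 < x₀) (hmin : ψ x₀ < ψ 0)
    (E : ℝ → ℝ → ℝ)
    (hE : ∀ a b : ℝ, E a b =
      Real.exp (ψ |a|) + Real.exp (ψ |b|) + ∫ x in a..b, g |x| * Real.exp (ψ |x|)) :
    ∃ v₀ > 0, ∀ v ∈ Ioo (0:ℝ) v₀, ∀ b c : ℝ,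
      x₀ < b → (∫ x in x₀..b, Real.exp (ψ |x|)) = v →
      0 < c → (∫ x in (-c)..c, Real.exp (ψ |x|)) = v →
      E x₀ b < E (-c) c := by
  have hE' : E = energy ψ g := funext₂ hE
  have hcont := continuous_energy hψ.continuous hg.continuous
  have hu : Continuous fun s => energy ψ g x₀ (x₀ + s) :=
    hcont.comp (continuous_const.prodMk (continuous_const.add continuous_id))
  have hw : Continuous fun t => energy ψ g (-t) t :=
    hcont.comp (continuous_neg.prodMk continuous_id)
  obtain ⟨δ, hδ, hnear⟩ := exists_forall_lt_of_continuousAt_of_lt (x := 0)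
    hu.continuousAt hw.continuousAt (by simpa [energy_self, abs_of_pos hx₀] using hmin)
  have hf : Continuous fun x => Real.exp (ψ |x|) := by
    have := hψ.continuous
    fun_prop
  have hf1 : ∀ x, 1 ≤ Real.exp (ψ |x|) := fun x => Real.one_le_exp (hψ0 _ (abs_nonneg x))
  refine ⟨δ, hδ, ?_⟩
  rintro v ⟨-, hvδ⟩ b c hb hbv hc hcv
  have hbx₀ : b - x₀ ≤ v :=
    hbv ▸ sub_le_intervalIntegral_of_one_le hb.le (hf.intervalIntegrable _ _) fun x _ => hf1 x
  have hcc : c - -c ≤ v := hcv ▸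
    sub_le_intervalIntegral_of_one_le (by linarith) (hf.intervalIntegrable _ _) fun x _ => hf1 x
  have hlt := hnear (b - x₀) c
    (by rw [Real.dist_0_eq_abs, abs_of_pos (by linarith)]; linarith)
    (by rw [Real.dist_0_eq_abs, abs_of_pos hc]; linarith)
  simpa [hE'] using hlt

/-- If `ψ` does not attain its minimum at the origin, then for small volumes the interval with
left endpoint `x₀` has strictly smaller energy than the centered symmetric interval of the same
weighted volume. -/
theorem off_center_interval_beats_centered
    (ψ g : ℝ → ℝ) (hψ : ContDiff ℝ 2 ψ) (hg : ContDiff ℝ 1 g)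
    (hψ0 : ∀ r : ℝ, 0 ≤ r → 0 ≤ ψ r) (hg0 : ∀ r : ℝ, 0 ≤ r → 0 ≤ g r)
    (hψ' : deriv ψ 0 = 0)
    (hadm : ∀ r : ℝ, 0 ≤ r → 0 ≤ deriv (deriv ψ) r + deriv g r)
    (x₀ : ℝ) (hx₀ : 0 < x₀) (hmin : ψ x₀ < ψ 0)
    (E : ℝ → ℝ → ℝ)
    (hE : ∀ a b : ℝ, E a b =
      Real.exp (ψ |a|) + Real.exp (ψ |b|) + ∫ x in a..b, g |x| * Real.exp (ψ |x|)) :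
    ∃ v₀ > 0, ∀ v ∈ Ioo (0:ℝ) v₀, ∀ b c : ℝ,
      x₀ < b → (∫ x in x₀..b, Real.exp (ψ |x|)) = v →
      0 < c → (∫ x in (-c)..c, Real.exp (ψ |x|)) = v →
      E x₀ b < E (-c) c :=
  off_center_interval_beats_centered_general ψ g hψ hg hψ0 x₀ hx₀ hmin E hE
end

section
/- Let α parametrize by arc length the circle of radius R > 0 centered at (a, 0) with a > 0, i.e. α(t) = (a + R cos(t/R), R sin(t/R)), with unit normal n(t) = (cos(t/R), sin(t/R)). Let ψ ∈ C^2 and g ∈ C^1 satisfy ψ' ≥ 0, ψ'' + g' > 0, and define H̃_1(t) = ψ'(|α(t)|) (α(t)·n(t))/|α(t)| + g(|α(t)|). Then H̃_1'(0) = 0 and H̃_1''(0) = (ψ''(|α(0)|) + g'(|α(0)|)) (1/|α(0)|)(1 - |α(0)|/R) + ψ'(|α(0)|)(1/|α(0)|)(1 - |α(0)|/R)(1/R - 1/|α(0)|) < 0, using that |α(0)| = a + R > R. -/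
/-!
Both terms of `H̃₁` depend on `t` only through `s(t) = |α(t)|² = a² + R² + 2aR cos (t/R)`, since
`α · n = a cos (t/R) + R = (s + R² - a²) / (2R)`. So `H̃₁ = W ∘ √· ∘ s` for an explicit `C¹`
function `W` of the radius, and `s` has a critical point at `0` with `s''(0) = -2a/R`. At a
critical point of the inner function the chain rule gives `(V ∘ s)''(0) = V'(s(0)) s''(0)` for
`V = W ∘ √·`, and `W'(a + R) = ψ'' + g' + ψ' a / (R (a + R))` is positive by the hypotheses on
`ψ` and `g`, so `H̃₁''(0) = -a W'(a + R) / (R (a + R)) < 0`.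
-/

open Real Filter Topology

section GeneralCalculus
variable {𝕜 F : Type*} [NontriviallyNormedField 𝕜] [NormedAddCommGroup F] [NormedSpace 𝕜 F]

theorem HasDerivAt.smul_continuousAt_of_eq_zero {u : 𝕜 → 𝕜} {A : 𝕜 → F} {x u' : 𝕜}
    (hu : HasDerivAt u u' x) (hux : u x = 0) (hA : ContinuousAt A x) :
    HasDerivAt (fun t => u t • A t) (u' • A x) x := by
  rw [hasDerivAt_iff_tendsto_slope] at hu ⊢
  have hslope : ∀ᶠ t in 𝓝[≠] x, slope (fun t => u t • A t) x t = slope u x t • A t :=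
    Eventually.of_forall fun t => by
      simp only [slope_def_module, hux, zero_smul, sub_zero, smul_smul, smul_eq_mul]
  rw [tendsto_congr' hslope]
  exact hu.smul (hA.tendsto.mono_left nhdsWithin_le_nhds)

theorem hasDerivAt_deriv_comp_of_deriv_eq_zero {G : 𝕜 → F} {φ : 𝕜 → 𝕜} {x φ'' : 𝕜}
    (hG : ContDiffAt 𝕜 1 G (φ x)) (hφ : ∀ᶠ y in 𝓝 x, DifferentiableAt 𝕜 φ y)
    (hφ'' : HasDerivAt (deriv φ) φ'' x) (hcrit : deriv φ x = 0) :
    HasDerivAt (deriv (G ∘ φ)) (φ'' • deriv G (φ x)) x := by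
  have hφc : ContinuousAt φ x := hφ.self_of_nhds.continuousAt
  have hGd : ∀ᶠ y in 𝓝 x, DifferentiableAt 𝕜 G (φ y) :=
    hφc.eventually ((hG.eventually (by simp)).mono fun _ h => h.differentiableAt one_ne_zero)
  have hchain : deriv (G ∘ φ) =ᶠ[𝓝 x] fun y => deriv φ y • deriv G (φ y) := by
    filter_upwards [hφ, hGd] with y hφy hGy
    exact deriv.scomp y hGy hφy
  have hG'c : ContinuousAt (fun y => deriv G (φ y)) x :=
    (hG.derivWithin (m := 0) le_rfl).continuousAt.comp hφc
  exact (hφ''.smul_continuousAt_of_eq_zero hcrit hG'c).congr_of_eventuallyEq hchain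

end GeneralCalculus

section OffCenterCircle

variable (a R : ℝ)

noncomputable def circleSqDist (t : ℝ) : ℝ := a ^ 2 + R ^ 2 + 2 * a * R * cos (t / R)

/-- `α · n / |α|` as a function of the radius `r = |α|` on the circle. -/
noncomputable def normalCosine (r : ℝ) : ℝ := (r ^ 2 + R ^ 2 - a ^ 2) / (2 * R * r)

noncomputable def weightedTerm (ψ g : ℝ → ℝ) (r : ℝ) : ℝ :=
  deriv ψ r * normalCosine a R r + g r

variable {a R}

theorem circleSqDist_eq (t : ℝ) :
    circleSqDist a R t = (a + R * cos (t / R)) ^ 2 + (R * sin (t / R)) ^ 2 := by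
  unfold circleSqDist
  linear_combination (-R ^ 2) * sin_sq_add_cos_sq (t / R)

theorem circleSqDist_zero : circleSqDist a R 0 = (a + R) ^ 2 := by
  simp only [circleSqDist, zero_div, cos_zero]
  ring

theorem hasDerivAt_circleSqDist (hR : R ≠ 0) (t : ℝ) :
    HasDerivAt (circleSqDist a R) (-(2 * a * sin (t / R))) t := by
  refine ((((hasDerivAt_id' t).div_const R).cos.const_mul (2 * a * R)).const_add
    (a ^ 2 + R ^ 2)).congr_deriv ?_
  field_simp

theorem deriv_circleSqDist (hR : R ≠ 0) :
    deriv (circleSqDist a R) = fun t => -(2 * a * sin (t / R)) :=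
  funext fun t => (hasDerivAt_circleSqDist hR t).deriv

theorem hasDerivAt_deriv_circleSqDist_zero (hR : R ≠ 0) :
    HasDerivAt (deriv (circleSqDist a R)) (-(2 * a / R)) 0 := by
  rw [deriv_circleSqDist hR]
  refine (((hasDerivAt_id' (0 : ℝ)).div_const R).sin.const_mul (2 * a)).neg.congr_deriv ?_
  simp only [zero_div, cos_zero]
  ring

theorem circle_inner_normal (θ : ℝ) :
    (a + R * cos θ) * cos θ + R * sin θ * sin θ = a * cos θ + R := by
  linear_combination R * sin_sq_add_cos_sq θ

theorem normalCosine_sqrt_circleSqDist (hR : R ≠ 0) (t : ℝ) :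
    normalCosine a R √(circleSqDist a R t) = (a * cos (t / R) + R) / √(circleSqDist a R t) := by
  have hs : 0 ≤ circleSqDist a R t := by rw [circleSqDist_eq]; positivity
  rw [normalCosine, sq_sqrt hs, circleSqDist, show a ^ 2 + R ^ 2 + 2 * a * R * cos (t / R) + R ^ 2 - a ^ 2
      = 2 * R * (a * cos (t / R) + R) by ring]
  exact mul_div_mul_left _ _ (mul_ne_zero two_ne_zero hR)

theorem hasDerivAt_normalCosine (hR : R ≠ 0) {r : ℝ} (hr : r ≠ 0) :
    HasDerivAt (normalCosine a R) ((r ^ 2 + a ^ 2 - R ^ 2) / (2 * R * r ^ 2)) r := by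
  refine ((((hasDerivAt_pow 2 r).add_const (R ^ 2)).sub_const (a ^ 2)).div
    ((hasDerivAt_id' r).const_mul (2 * R)) (by simp [hR, hr])).congr_deriv ?_
  field_simp
  ring

theorem hasDerivAt_weightedTerm {ψ g : ℝ → ℝ} {r : ℝ}
    (hψ : DifferentiableAt ℝ (deriv ψ) r) (hg : DifferentiableAt ℝ g r) (hR : R ≠ 0)
    (hr : r ≠ 0) :
    HasDerivAt (weightedTerm a R ψ g)
      (deriv (deriv ψ) r * normalCosine a R r
        + deriv ψ r * ((r ^ 2 + a ^ 2 - R ^ 2) / (2 * R * r ^ 2)) + deriv g r) r :=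
  (hψ.hasDerivAt.mul (hasDerivAt_normalCosine hR hr)).add hg.hasDerivAt

theorem contDiffAt_weightedTerm {ψ g : ℝ → ℝ} (hψ : ContDiff ℝ 2 ψ) (hg : ContDiff ℝ 1 g)
    (hR : R ≠ 0) {r : ℝ} (hr : r ≠ 0) : ContDiffAt ℝ 1 (weightedTerm a R ψ g) r := by
  have hψ' : ContDiff ℝ 1 (deriv ψ) := hψ.deriv'
  unfold weightedTerm normalCosine
  fun_prop (disch := simp [hR, hr])

theorem contDiffAt_weightedTerm_comp_sqrt {ψ g : ℝ → ℝ} (hψ : ContDiff ℝ 2 ψ)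
    (hg : ContDiff ℝ 1 g) (hR : R ≠ 0) {s : ℝ} (hs : 0 < s) :
    ContDiffAt ℝ 1 (weightedTerm a R ψ g ∘ sqrt) s :=
  (contDiffAt_weightedTerm hψ hg hR (sqrt_pos.2 hs).ne').comp s (contDiffAt_sqrt hs.ne')

theorem hasDerivAt_weightedTerm_comp_sqrt_circleSqDist_zero {ψ g : ℝ → ℝ}
    (hψ : DifferentiableAt ℝ (deriv ψ) (a + R)) (hg : DifferentiableAt ℝ g (a + R))
    (hR : R ≠ 0) (haR : 0 < a + R) :
    HasDerivAt (weightedTerm a R ψ g ∘ sqrt)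
      ((deriv (deriv ψ) (a + R) + deriv g (a + R) + deriv ψ (a + R) * (a / (R * (a + R))))
        / (2 * (a + R))) (circleSqDist a R 0) := by
  have hsqrt : HasDerivAt sqrt (1 / (2 * (a + R))) (circleSqDist a R 0) := by
    have h := hasDerivAt_sqrt (x := (a + R) ^ 2) (by positivity)
    rwa [sqrt_sq haR.le, ← circleSqDist_zero] at h
  refine ((hasDerivAt_weightedTerm hψ hg hR haR.ne').comp_of_eq _ hsqrt ?_).congr_deriv ?_
  · rw [circleSqDist_zero, sqrt_sq haR.le]
  · simp only [normalCosine]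
    field_simp
    ring

end OffCenterCircle

/-- Second derivative of the weighted curvature term along an off-center circle: it vanishes to
first order and is strictly negative to second order at the farthest point. Here
`α(t) = (a + R cos(t/R), R sin(t/R))`, `n(t) = (cos(t/R), sin(t/R))`, `m t = |α(t)|`,
`dotn t = α(t)·n(t)`, and `H̃₁(t) = ψ'(|α(t)|)(α(t)·n(t))/|α(t)| + g(|α(t)|)`. -/
theorem weighted_curvature_second_derivative_off_center
    (a R : ℝ) (ha : 0 < a) (hR : 0 < R)
    (ψ g : ℝ → ℝ) (hψ : ContDiff ℝ 2 ψ) (hg : ContDiff ℝ 1 g)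
    (hψ' : ∀ r : ℝ, 0 ≤ r → 0 ≤ deriv ψ r)
    (hstab : ∀ r : ℝ, 0 ≤ r → 0 < deriv (deriv ψ) r + deriv g r)
    (m dotn H₁ : ℝ → ℝ)
    (hm : ∀ t : ℝ, m t = Real.sqrt ((a + R * Real.cos (t / R)) ^ 2
      + (R * Real.sin (t / R)) ^ 2))
    (hdotn : ∀ t : ℝ, dotn t = (a + R * Real.cos (t / R)) * Real.cos (t / R)
      + (R * Real.sin (t / R)) * Real.sin (t / R))
    (hH₁ : ∀ t : ℝ, H₁ t = deriv ψ (m t) * (dotn t / m t) + g (m t)) :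
    deriv H₁ 0 = 0 ∧
    deriv (deriv H₁) 0 =
      (deriv (deriv ψ) (m 0) + deriv g (m 0)) * (1 / m 0) * (1 - m 0 / R)
        + deriv ψ (m 0) * (1 / m 0) * (1 - m 0 / R) * (1 / R - 1 / m 0) ∧
    deriv (deriv H₁) 0 < 0 := by
  have hR0 : R ≠ 0 := hR.ne'
  have haR : 0 < a + R := by linarith
  have hm_sqrt : ∀ t, m t = √(circleSqDist a R t) := fun t => by rw [hm, circleSqDist_eq]
  have hH : H₁ = (weightedTerm a R ψ g ∘ sqrt) ∘ circleSqDist a R := funext fun t => by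
    simp only [Function.comp_apply, weightedTerm, hH₁, hm_sqrt, hdotn, circle_inner_normal,
      normalCosine_sqrt_circleSqDist hR0]
  have hcrit : deriv (circleSqDist a R) 0 = 0 := by simp [deriv_circleSqDist hR0]
  have hW := hasDerivAt_weightedTerm_comp_sqrt_circleSqDist_zero
    (hψ.differentiable_deriv_two (a + R)) (hg.differentiable one_ne_zero (a + R)) hR0 haR
  have hs0 : 0 < circleSqDist a R 0 := by rw [circleSqDist_zero]; positivity
  have hsecond := hasDerivAt_deriv_comp_of_deriv_eq_zero
    (contDiffAt_weightedTerm_comp_sqrt (a := a) hψ hg hR0 hs0)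
    (Eventually.of_forall fun t => (hasDerivAt_circleSqDist hR0 t).differentiableAt)
    (hasDerivAt_deriv_circleSqDist_zero hR0) hcrit
  rw [hW.deriv, ← hH, smul_eq_mul] at hsecond
  refine ⟨?_, ?_, ?_⟩
  · rw [hH, deriv_comp _ hW.differentiableAt (hasDerivAt_circleSqDist hR0 0).differentiableAt,
      hcrit, mul_zero]
  · rw [hsecond.deriv, hm_sqrt, circleSqDist_zero, sqrt_sq haR.le]
    field_simp
    ring
  · have hS := hstab (a + R) haR.le
    have hP := hψ' (a + R) haR.le
    rw [hsecond.deriv, neg_mul, neg_neg_iff_pos]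
    positivity
end

section
/- Let α(t) = (a + r cos(t/r), r sin(t/r)) parametrize a circle of radius r centered at (a, 0), n(t) = (cos(t/r), sin(t/r)), and let θ(t) ∈ (π/2, π) be the angle between α(t) and α'(t) at some time t with |α(t)| ≥ r. Then d/dt [sin θ(t)] = cos θ(t) (1/r - sin θ(t)/|α(t)|) ≤ 0. -/
open Real Set

/-!
Since `|α|² = a² + 2ar cos(t/r) + r²` and `α·n = a cos(t/r) + r`, the sine of the angle is the
explicit function `(a cos(t/r) + r) / √(a² + 2ar cos(t/r) + r²)`, whose derivative is computed
directly. The sign follows from `cos θ ≤ 0` and `sin θ / |α| ≤ 1/|α| ≤ 1/r`.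
-/

lemma circle_sq_add_sq (a r u : ℝ) :
    (a + r * cos u) ^ 2 + (r * sin u) ^ 2 = a ^ 2 + 2 * a * r * cos u + r ^ 2 := by
  linear_combination r ^ 2 * sin_sq_add_cos_sq u

lemma circle_mul_cos_add_mul_sin (a r u : ℝ) :
    (a + r * cos u) * cos u + r * sin u * sin u = a * cos u + r := by
  linear_combination r * sin_sq_add_cos_sq u

lemma hasDerivAt_circle_sin_angle {a r M : ℝ} (t : ℝ) (hr : r ≠ 0)
    (hM : √(a ^ 2 + 2 * a * r * cos (t / r) + r ^ 2) = M) (hM0 : M ≠ 0) :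
    HasDerivAt (fun t => (a * cos (t / r) + r) / √(a ^ 2 + 2 * a * r * cos (t / r) + r ^ 2))
      (-(a * sin (t / r)) / M * (1 / r - (a * cos (t / r) + r) / M / M)) t := by
  have hu : HasDerivAt (fun t : ℝ => t / r) (1 / r) t := by
    simpa using (hasDerivAt_id t).div_const r
  have hcos : HasDerivAt (fun t => cos (t / r)) (-sin (t / r) * (1 / r)) t :=
    (hasDerivAt_cos _).comp t hu
  have hsq := (((hcos.const_mul (2 * a * r)).const_add (a ^ 2)).add_const (r ^ 2)).sqrt
    fun h => hM0 (by rw [← hM, h, sqrt_zero])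
  refine (((hcos.const_mul a).add_const r).div hsq (hM ▸ hM0)).congr_deriv ?_
  rw [hM]
  field_simp
  ring

lemma cos_mul_sub_sin_div_nonpos {x r M : ℝ} (hx : cos x ≤ 0) (hr : 0 < r) (hrM : r ≤ M) :
    cos x * (1 / r - sin x / M) ≤ 0 := by
  have hM : 0 < M := hr.trans_le hrM
  have : sin x / M ≤ 1 / r :=
    calc sin x / M ≤ 1 / M := by gcongr; exact sin_le_one x
      _ ≤ 1 / r := one_div_le_one_div_of_le hr hrM
  exact mul_nonpos_of_nonpos_of_nonneg hx (by linarith)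

theorem sin_angle_decreasing_along_circle_general
    (a r : ℝ) (hr : 0 < r)
    (m : ℝ → ℝ)
    (hm : ∀ t : ℝ, m t = Real.sqrt ((a + r * Real.cos (t / r)) ^ 2
      + (r * Real.sin (t / r)) ^ 2))
    (θ : ℝ → ℝ)
    (hsin : ∀ t : ℝ, Real.sin (θ t) =
      ((a + r * Real.cos (t / r)) * Real.cos (t / r)
        + (r * Real.sin (t / r)) * Real.sin (t / r)) / m t)
    (hcos : ∀ t : ℝ, Real.cos (θ t) =
      ((a + r * Real.cos (t / r)) * (-Real.sin (t / r))
        + (r * Real.sin (t / r)) * Real.cos (t / r)) / m t)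
    (t₀ : ℝ) (hθ₀ : θ t₀ ∈ Ioo (π / 2) π) (hm₀ : r ≤ m t₀) :
    deriv (fun t => Real.sin (θ t)) t₀ =
      Real.cos (θ t₀) * (1 / r - Real.sin (θ t₀) / m t₀) ∧
    deriv (fun t => Real.sin (θ t)) t₀ ≤ 0 := by
  have hm' (t : ℝ) : m t = √(a ^ 2 + 2 * a * r * cos (t / r) + r ^ 2) := by
    rw [hm, circle_sq_add_sq]
  have hsin' (t : ℝ) : sin (θ t) = (a * cos (t / r) + r) / m t := by
    rw [hsin, circle_mul_cos_add_mul_sin]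
  have hcos₀ : cos (θ t₀) = -(a * sin (t₀ / r)) / m t₀ := by
    rw [hcos]; ring
  have hderiv := hasDerivAt_circle_sin_angle (a := a) t₀ hr.ne' (hm' t₀).symm
    (hr.trans_le hm₀).ne'
  simp only [← hm', ← hsin', ← hcos₀] at hderiv
  rw [hderiv.deriv]
  exact ⟨rfl, cos_mul_sub_sin_div_nonpos
    (cos_nonpos_of_pi_div_two_le_of_le hθ₀.1.le (by linarith [hθ₀.2, pi_pos])) hr hm₀⟩

/-- Monotonicity of the sine of the angle between the position vector and the tangent along a
circle: `d/dt sin θ = cos θ (1/r - sin θ / |α|) ≤ 0` when `θ ∈ (π/2, π)` and `|α| ≥ r`. Here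
`α(t) = (a + r cos(t/r), r sin(t/r))`, `m t = |α(t)|`, `sin θ = α·n/|α|`, `cos θ = α·α'/|α|`. -/
theorem sin_angle_decreasing_along_circle
    (a r : ℝ) (hr : 0 < r)
    (m : ℝ → ℝ)
    (hm : ∀ t : ℝ, m t = Real.sqrt ((a + r * Real.cos (t / r)) ^ 2
      + (r * Real.sin (t / r)) ^ 2))
    (θ : ℝ → ℝ) (hθdiff : Differentiable ℝ θ)
    (hsin : ∀ t : ℝ, Real.sin (θ t) =
      ((a + r * Real.cos (t / r)) * Real.cos (t / r)
        + (r * Real.sin (t / r)) * Real.sin (t / r)) / m t)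
    (hcos : ∀ t : ℝ, Real.cos (θ t) =
      ((a + r * Real.cos (t / r)) * (-Real.sin (t / r))
        + (r * Real.sin (t / r)) * Real.cos (t / r)) / m t)
    (t₀ : ℝ) (hθ₀ : θ t₀ ∈ Ioo (π / 2) π) (hm₀ : r ≤ m t₀) :
    deriv (fun t => Real.sin (θ t)) t₀ =
      Real.cos (θ t₀) * (1 / r - Real.sin (θ t₀) / m t₀) ∧
    deriv (fun t => Real.sin (θ t)) t₀ ≤ 0 :=
  sin_angle_decreasing_along_circle_general a r hr m hm θ hsin hcos t₀ hθ₀ hm₀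
end
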